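/- Let k, d > 0, let u ∈ ℝ³ be a unit vector, and let G = (−i e^{ikd}/(4πd)) · [(1 + i/(kd) − 1/(k²d²)) I₃ + (3/(k²d²) − 3i/(kd) − 1) uuᵀ] be a 3×3 complex matrix. Then trace(Gᴴ G) = 1/(8π²d²) + 1/(8π²k²d⁴) + 3/(8π²k⁴d⁶). -/
import Mathlib


open Matrix

lemma aux_scalar (x : ℂ) :
    3 * ((1 - Complex.I * x - x ^ 2) * (1 + Complex.I * x - x ^ 2))
      + ((1 - Complex.I * x - x ^ 2) * (3 * x ^ 2 - 3 * Complex.I * x - 1)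
        + (3 * x ^ 2 + 3 * Complex.I * x - 1) * (1 + Complex.I * x - x ^ 2)
        + (3 * x ^ 2 + 3 * Complex.I * x - 1) * (3 * x ^ 2 - 3 * Complex.I * x - 1))
    = 2 + 2 * x ^ 2 + 6 * x ^ 4 := by
  linear_combination (-6 * x ^ 2) * Complex.I_sq

lemma aux_trace (c a b : ℂ) (P : Matrix (Fin 3) (Fin 3) ℂ)
    (hPH : Pᴴ = P) (hP2 : P * P = P) (htrP : P.trace = 1) :
    ((c • (a • (1 : Matrix (Fin 3) (Fin 3) ℂ) + b • P))ᴴ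
        * (c • (a • (1 : Matrix (Fin 3) (Fin 3) ℂ) + b • P))).trace
      = (starRingEnd ℂ c * c) * (3 * (starRingEnd ℂ a * a)
          + (starRingEnd ℂ a * b + starRingEnd ℂ b * a + starRingEnd ℂ b * b)) := by
  simp only [Matrix.conjTranspose_smul, Matrix.conjTranspose_add, Matrix.conjTranspose_one,
    hPH, Matrix.smul_mul, Matrix.mul_smul, Matrix.add_mul, Matrix.mul_add, Matrix.one_mul,
    Matrix.mul_one, hP2, smul_smul, smul_add, Matrix.trace_smul, Matrix.trace_add,
    Matrix.trace_one, smul_eq_mul, htrP, Fintype.card_fin, Nat.cast_ofNat, starRingEnd_apply,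
    star_mul']
  ring

lemma aux_real (k d : ℝ) (hk' : k ≠ 0) (hd' : d ≠ 0) :
    1 / (16 * Real.pi ^ 2 * d ^ 2) * (2 + 2 * (1 / (k * d)) ^ 2 + 6 * (1 / (k * d)) ^ 4)
      = 1 / (8 * Real.pi ^ 2 * d ^ 2) + 1 / (8 * Real.pi ^ 2 * k ^ 2 * d ^ 4)
          + 3 / (8 * Real.pi ^ 2 * k ^ 4 * d ^ 6) := by
  have := Real.pi_ne_zero
  field_simp
  ring

set_option maxHeartbeats 1000000 in
theorem stmt_11 (k d : ℝ) (hk : 0 < k) (hd : 0 < d)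
    (u : Fin 3 → ℝ) (hu : ∑ i, u i ^ 2 = 1)
    (G : Matrix (Fin 3) (Fin 3) ℂ)
    (hG : G = (-Complex.I * Complex.exp (Complex.I * k * d) / (4 * Real.pi * d)) •
        ((1 + Complex.I / (k * d) - 1 / (k ^ 2 * d ^ 2)) • (1 : Matrix (Fin 3) (Fin 3) ℂ)
          + (3 / (k ^ 2 * d ^ 2) - 3 * Complex.I / (k * d) - 1) •
              Matrix.of fun i j => ((u i * u j : ℝ) : ℂ))) :
    (Gᴴ * G).trace
      = ((1 / (8 * Real.pi ^ 2 * d ^ 2) + 1 / (8 * Real.pi ^ 2 * k ^ 2 * d ^ 4)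
          + 3 / (8 * Real.pi ^ 2 * k ^ 4 * d ^ 6) : ℝ) : ℂ) := by
  have hk' : (k : ℂ) ≠ 0 := Complex.ofReal_ne_zero.mpr hk.ne'
  have hd' : (d : ℂ) ≠ 0 := Complex.ofReal_ne_zero.mpr hd.ne'
  have hpi : (Real.pi : ℂ) ≠ 0 := Complex.ofReal_ne_zero.mpr Real.pi_ne_zero
  have hu' : ((u 0 : ℂ))^2 + (u 1 : ℂ)^2 + (u 2 : ℂ)^2 = 1 := by
    have := hu
    rw [Fin.sum_univ_three] at this
    exact_mod_cast this
  have hPH : (Matrix.of fun i j => ((u i * u j : ℝ) : ℂ))ᴴ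
      = Matrix.of fun i j => ((u i * u j : ℝ) : ℂ) := by
    ext i j
    simp [Matrix.conjTranspose_apply, ← Complex.ofReal_mul, mul_comm]
  have hP2 : (Matrix.of fun i j => ((u i * u j : ℝ) : ℂ))
        * (Matrix.of fun i j => ((u i * u j : ℝ) : ℂ))
      = Matrix.of fun i j => ((u i * u j : ℝ) : ℂ) := by
    ext i j
    simp only [Matrix.mul_apply, Matrix.of_apply, Fin.sum_univ_three]
    push_cast
    linear_combination ((u i : ℂ) * (u j : ℂ)) * hu'
  have htrP : (Matrix.of fun i j => ((u i * u j : ℝ) : ℂ)).trace = 1 := by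
    simp only [Matrix.trace, Matrix.diag, Matrix.of_apply, Fin.sum_univ_three]
    push_cast
    linear_combination hu'
  have hE : (starRingEnd ℂ) (Complex.exp (Complex.I * k * d))
      * Complex.exp (Complex.I * k * d) = 1 := by
    rw [← Complex.exp_conj, ← Complex.exp_add]
    simp [Complex.ext_iff]
  have hI2 : Complex.I ^ 2 = -1 := Complex.I_sq
  have hcc : (starRingEnd ℂ) (-Complex.I * Complex.exp (Complex.I * k * d) / (4 * Real.pi * d))
        * (-Complex.I * Complex.exp (Complex.I * k * d) / (4 * Real.pi * d))
      = 1 / (16 * (Real.pi : ℂ) ^ 2 * (d : ℂ) ^ 2) := by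
    simp only [map_div₀, _root_.map_mul, map_neg, Complex.conj_I, Complex.conj_ofReal,
      map_ofNat, neg_neg]
    rw [div_mul_div_comm]
    rw [show Complex.I * (starRingEnd ℂ) (Complex.exp (Complex.I * k * d))
          * (-Complex.I * Complex.exp (Complex.I * k * d)) = (1 : ℂ) by
      linear_combination (-((starRingEnd ℂ) (Complex.exp (Complex.I * ↑k * ↑d))
          * Complex.exp (Complex.I * ↑k * ↑d))) * hI2 + hE]
    rw [show (4 * (Real.pi:ℂ) * d) * (4 * (Real.pi:ℂ) * d)
        = 16 * (Real.pi:ℂ)^2 * (d:ℂ)^2 by ring]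
  rw [hG, aux_trace _ _ _ _ hPH hP2 htrP, hcc]
  simp only [map_sub, map_add, map_div₀, _root_.map_mul, _root_.map_one, Complex.conj_I,
    Complex.conj_ofReal, map_ofNat, map_pow]
  have hfin : 1 / (16 * (Real.pi:ℂ) ^ 2 * (d:ℂ) ^ 2)
        * (2 + 2 * (1 / ((k:ℂ) * d)) ^ 2 + 6 * (1 / ((k:ℂ) * d)) ^ 4)
      = ((1 / (8 * Real.pi ^ 2 * d ^ 2) + 1 / (8 * Real.pi ^ 2 * k ^ 2 * d ^ 4)
          + 3 / (8 * Real.pi ^ 2 * k ^ 4 * d ^ 6) : ℝ) : ℂ) := by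
    have h := aux_real k d (by exact_mod_cast hk') (by exact_mod_cast hd')
    exact_mod_cast congrArg Complex.ofReal h
  linear_combination (1 / (16 * (Real.pi:ℂ) ^ 2 * (d:ℂ) ^ 2))
      * aux_scalar (1 / ((k:ℂ) * d)) + hfin
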